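/- Let G be a complete edge-weighted graph whose edge weights take only two values a < b, and let G_a be the unweighted graph consisting of the edges of weight a. Then the minimum weight of a Hamiltonian cycle (TSP tour) in G equals n*a + (b - a)*HCN(G_a), where n is the number of vertices (n ≥ 3). -/

import Mathlib

open SimpleGraph

variable {V : Type*}

/-- A list of vertices forming a path in `G`: nonempty, with distinct vertices,
and consecutive vertices adjacent. -/
def IsPathList (G : SimpleGraph V) (l : List V) : Prop :=
  l ≠ [] ∧ l.Nodup ∧ l.Chain' G.Adj

/-- A path partition of `G`: a list of pairwise vertex-disjoint paths covering
every vertex exactly once. -/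
def IsPathPartition (G : SimpleGraph V) (L : List (List V)) : Prop :=
  (∀ l ∈ L, IsPathList G l) ∧ L.flatten.Nodup ∧ ∀ v : V, v ∈ L.flatten

/-- The path partition number of `G`: the minimum number of paths in a path
partition of `G`. -/
noncomputable def ppn (G : SimpleGraph V) : ℕ :=
  sInf {k | ∃ L : List (List V), IsPathPartition G L ∧ L.length = k}

/-- A graph is Hamiltonian iff it contains a Hamiltonian cycle. -/
def IsHamiltonianGraph [DecidableEq V] (G : SimpleGraph V) : Prop :=
  ∃ (v : V) (p : G.Walk v v), p.IsHamiltonianCycle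

/-- The Hamiltonian completion number of `G`: the minimum number of new edges
(between distinct vertices, not already present in `G`) whose addition makes
`G` Hamiltonian. -/
noncomputable def hcn [DecidableEq V] (G : SimpleGraph V) : ℕ :=
  sInf {k | ∃ E' : Finset (Sym2 V), E'.card = k ∧
    (∀ e ∈ E', ¬ e.IsDiag ∧ e ∉ G.edgeSet) ∧
    IsHamiltonianGraph (G ⊔ SimpleGraph.fromEdgeSet ↑E')}


/-!
A tour of the complete graph using `k` edges outside `G_a` weighs `n * a + (b - a) * k`, so it
suffices that `HCN(G_a)` is the least such `k`. Adding to `G_a` the `k` missing edges of a tour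
makes it Hamiltonian; conversely a Hamiltonian cycle of `G_a` plus a set `E'` of new edges is a
tour whose edges outside `G_a` all lie in `E'`.
-/

theorem List.Nodup.sum_map_of_forall_eq_or_eq {α : Type*} {l : List α} (hl : l.Nodup)
    {w : α → ℝ} {a b : ℝ} (hw : ∀ x ∈ l, w x = a ∨ w x = b) :
    (l.map w).sum = l.length * a + (b - a) * {x | x ∈ l ∧ w x ≠ a}.ncard := by
  classical
  have hsplit : ∀ x ∈ l.toFinset, w x = a + (b - a) * if w x ≠ a then 1 else 0 := by
    intro x hx
    rcases hw x (List.mem_toFinset.1 hx) with h | h <;> by_cases h' : w x = a <;> simp_all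
  have hset : {x | x ∈ l ∧ w x ≠ a} = ↑(l.toFinset.filter (w · ≠ a)) := by
    ext x; simp
  rw [← List.sum_toFinset _ hl, Finset.sum_congr rfl hsplit, Finset.sum_add_distrib,
    ← Finset.mul_sum, Finset.sum_boole, hset, Set.ncard_coe_finset, Finset.sum_const,
    List.toFinset_card_of_nodup hl, nsmul_eq_mul]

namespace SimpleGraph

theorem exists_isHamiltonianCycle_top [Fintype V] [DecidableEq V] (h3 : 3 ≤ Fintype.card V) :
    ∃ (v : V) (p : (⊤ : SimpleGraph V).Walk v v), p.IsHamiltonianCycle := by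
  have hcopy : cycleGraph (Fintype.card V) ⊑ (⊤ : SimpleGraph V) :=
    isContained_top_iff.2 ⟨(Fintype.equivFin V).symm.toEmbedding⟩
  obtain ⟨v, p, hp, hlen⟩ := (cycleGraph_isContained_iff h3).1 hcopy
  exact ⟨v, p, Walk.isHamiltonianCycle_iff_isCycle_and_length_eq.2 ⟨hp, hlen⟩⟩

theorem mem_edgeSet_fromRel_sym2 {f : Sym2 V → Prop} {e : Sym2 V} :
    e ∈ (fromRel fun u v => f s(u, v)).edgeSet ↔ ¬e.IsDiag ∧ f e := by
  induction e with
  | h u v => simp [Sym2.eq_swap (a := v), or_self]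

theorem Walk.not_isDiag_of_mem_edges {G : SimpleGraph V} {u v : V} {p : G.Walk u v}
    {e : Sym2 V} (he : e ∈ p.edges) : ¬ e.IsDiag :=
  G.not_isDiag_of_mem_edgeSet (p.edges_subset_edgeSet he)

theorem Walk.IsHamiltonianCycle.transfer [DecidableEq V] {G H : SimpleGraph V} {v : V}
    {p : G.Walk v v} (hp : p.IsHamiltonianCycle) (h : ∀ e ∈ p.edges, e ∈ H.edgeSet) :
    (p.transfer H h).IsHamiltonianCycle := by
  rw [Walk.isHamiltonianCycle_iff_isCycle_and_support_count_tail_eq_one] at hp ⊢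
  exact ⟨hp.1.transfer h, by simpa [Walk.support_transfer] using hp.2⟩

theorem Walk.IsHamiltonianCycle.sum_map_edges_eq [Fintype V] [DecidableEq V]
    {G : SimpleGraph V} {v : V} {p : G.Walk v v} (hp : p.IsHamiltonianCycle)
    {w : Sym2 V → ℝ} {a b : ℝ} (hw : ∀ e : Sym2 V, ¬ e.IsDiag → w e = a ∨ w e = b) :
    (p.edges.map w).sum = Fintype.card V * a
      + (b - a) * (p.edgeSet \ (fromRel fun u v => w s(u, v) = a).edgeSet).ncard := by
  have hset : {e | e ∈ p.edges ∧ w e ≠ a}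
      = p.edgeSet \ (fromRel fun u v => w s(u, v) = a).edgeSet := by
    ext e
    simp +contextual [mem_edgeSet_fromRel_sym2 (f := (w · = a)),
      fun he : e ∈ p.edges => not_isDiag_of_mem_edges he]
  rw [hp.isCycle.edges_nodup.sum_map_of_forall_eq_or_eq
    (fun e he => hw e (not_isDiag_of_mem_edges he)), length_edges, hp.length_eq, hset]

end SimpleGraph

section HamiltonianCompletion

variable {H : SimpleGraph V} {E : Finset (Sym2 V)} {v : V}

theorem ncard_edgeSet_sdiff_le_card (q : (H ⊔ fromEdgeSet ↑E).Walk v v) :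
    (q.edgeSet \ H.edgeSet).ncard ≤ E.card := by
  rw [← Set.ncard_coe_finset]
  refine Set.ncard_le_ncard (fun e ⟨he, heH⟩ => ?_) E.finite_toSet
  have := q.edges_subset_edgeSet he
  rw [edgeSet_sup, edgeSet_fromEdgeSet] at this
  exact this.resolve_left heH |>.1

variable [DecidableEq V]

def IsHamiltonianCompletion (H : SimpleGraph V) (E : Finset (Sym2 V)) : Prop :=
  (∀ e ∈ E, ¬ e.IsDiag ∧ e ∉ H.edgeSet) ∧ IsHamiltonianGraph (H ⊔ fromEdgeSet ↑E)

theorem hcn_eq_sInf (H : SimpleGraph V) :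
    hcn H = sInf {k | ∃ E, E.card = k ∧ IsHamiltonianCompletion H E} :=
  rfl

theorem IsHamiltonianCompletion.hcn_le (hE : IsHamiltonianCompletion H E) : hcn H ≤ E.card :=
  Nat.sInf_le ⟨E, rfl, hE⟩

theorem exists_isHamiltonianCompletion_of_isHamiltonianCycle
    {p : (⊤ : SimpleGraph V).Walk v v} (hp : p.IsHamiltonianCycle) :
    ∃ E, IsHamiltonianCompletion H E ∧ E.card = (p.edgeSet \ H.edgeSet).ncard := by
  have hfin : (p.edgeSet \ H.edgeSet).Finite := p.edges.finite_toSet.subset Set.sdiff_subset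
  have hsup : ∀ e ∈ p.edges, e ∈ (H ⊔ fromEdgeSet ↑hfin.toFinset).edgeSet := by
    intro e he
    rw [edgeSet_sup, Set.Finite.coe_toFinset, edgeSet_fromEdgeSet]
    by_cases heH : e ∈ H.edgeSet
    · exact Or.inl heH
    · exact Or.inr ⟨⟨he, heH⟩, Walk.not_isDiag_of_mem_edges he⟩
  refine ⟨hfin.toFinset, ⟨fun e he => ?_, v, p.transfer _ hsup, hp.transfer hsup⟩,
    (Set.ncard_eq_toFinset_card _ hfin).symm⟩
  rw [Set.Finite.mem_toFinset] at he
  exact ⟨Walk.not_isDiag_of_mem_edges he.1, he.2⟩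

theorem exists_isHamiltonianCompletion_card_eq_hcn [Fintype V] (h3 : 3 ≤ Fintype.card V) :
    ∃ E, IsHamiltonianCompletion H E ∧ E.card = hcn H := by
  obtain ⟨v, p, hp⟩ := exists_isHamiltonianCycle_top h3
  obtain ⟨E, hE, -⟩ := exists_isHamiltonianCompletion_of_isHamiltonianCycle (H := H) hp
  have hmem := Nat.sInf_mem
    (s := {k | ∃ E, E.card = k ∧ IsHamiltonianCompletion H E}) ⟨_, E, rfl, hE⟩
  rw [← hcn_eq_sInf] at hmem
  obtain ⟨E', hcard, hE'⟩ := hmem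
  exact ⟨E', hE', hcard⟩

theorem isLeast_hcn [Fintype V] (h3 : 3 ≤ Fintype.card V) (H : SimpleGraph V) :
    IsLeast {k | ∃ (v : V) (p : (⊤ : SimpleGraph V).Walk v v),
      p.IsHamiltonianCycle ∧ (p.edgeSet \ H.edgeSet).ncard = k} (hcn H) := by
  set S := {k | ∃ (v : V) (p : (⊤ : SimpleGraph V).Walk v v),
    p.IsHamiltonianCycle ∧ (p.edgeSet \ H.edgeSet).ncard = k}
  have hlower : hcn H ∈ lowerBounds S := by
    rintro _ ⟨v, p, hp, rfl⟩
    obtain ⟨E, hE, hcard⟩ := exists_isHamiltonianCompletion_of_isHamiltonianCycle (H := H) hp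
    exact hcard ▸ hE.hcn_le
  obtain ⟨E, ⟨-, v, q, hq⟩, hcard⟩ := exists_isHamiltonianCompletion_card_eq_hcn (H := H) h3
  refine ⟨⟨v, q.mapLe le_top, hq.map Function.bijective_id, le_antisymm ?_ ?_⟩, hlower⟩
  · rw [Walk.edgeSet_mapLe_eq_edgeSet, ← hcard]
    exact ncard_edgeSet_sdiff_le_card q
  · exact hlower ⟨v, q.mapLe le_top, hq.map Function.bijective_id, rfl⟩

end HamiltonianCompletion

theorem two_valued_tsp [Fintype V] [DecidableEq V] (h3 : 3 ≤ Fintype.card V)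
    (w : Sym2 V → ℝ) (a b : ℝ) (hab : a < b)
    (hw : ∀ e : Sym2 V, ¬ e.IsDiag → w e = a ∨ w e = b) :
    sInf {x : ℝ | ∃ (v : V) (p : (⊤ : SimpleGraph V).Walk v v),
        p.IsHamiltonianCycle ∧ (p.edges.map w).sum = x}
      = (Fintype.card V : ℝ) * a
        + (b - a) * hcn (SimpleGraph.fromRel fun u v => w s(u, v) = a) := by
  obtain ⟨⟨v, p, hp, hcard⟩, hle⟩ :=
    isLeast_hcn h3 (SimpleGraph.fromRel fun u v => w s(u, v) = a)
  refine IsLeast.csInf_eq ⟨⟨v, p, hp, by rw [hp.sum_map_edges_eq hw, hcard]⟩, ?_⟩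
  rintro _ ⟨u, q, hq, rfl⟩
  rw [hq.sum_map_edges_eq hw]
  have hk := hle ⟨u, q, hq, rfl⟩
  exact add_le_add_right (mul_le_mul_of_nonneg_left (Nat.cast_le.2 hk) (sub_nonneg.2 hab.le)) _
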